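/- In the low-rank augmentation where Z_ℓ(j) | X = x ∼ N(p_jᵀ y_ℓ, 1/μ_j) are mutually independent over ℓ ∈ [q], j ∈ [k], and X follows the Potts model with Hamiltonian (1/2)∑_ℓ ∑_j μ_j (p_jᵀ y_ℓ)², the conditional law of X given Z = z makes X_1,…,X_n independent with P(X_i = ℓ | Z = z) = exp(∑_{j=1}^k μ_j z_ℓ(j) p_j(i)) / ∑_{a=1}^q exp(∑_{j=1}^k μ_j z_a(j) p_j(i)). -/
import Mathlib

open Matrix Finset Real

/-- Unnormalized joint density of `(X, Z)` in the low-rank Gaussian augmentation: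
the low-rank Potts weight times the density of the independent Gaussians
`Z_ℓ(j) | X = x ~ N(p_jᵀ y_ℓ, 1/μ_j)`. -/
noncomputable def jointLowRankAG {n q k : ℕ} (μ : Fin k → ℝ) (p : Fin k → Fin n → ℝ)
    (x : Fin n → Fin q) (z : Fin q → Fin k → ℝ) : ℝ :=
  Real.exp ((1 / 2) * ∑ ℓ : Fin q, ∑ j : Fin k,
      μ j * (p j ⬝ᵥ fun i => if x i = ℓ then (1:ℝ) else 0) ^ 2)
    * Real.exp (-(1 / 2) * ∑ ℓ : Fin q, ∑ j : Fin k,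
      μ j * (z ℓ j - (p j ⬝ᵥ fun i => if x i = ℓ then (1:ℝ) else 0)) ^ 2)

theorem stmt7 (n q k : ℕ) (hq : 2 ≤ q) (μ : Fin k → ℝ) (hμ : ∀ j, 0 < μ j)
    (p : Fin k → Fin n → ℝ)
    (horth : ∀ j j' : Fin k, p j ⬝ᵥ p j' = if j = j' then (1:ℝ) else 0)
    (z : Fin q → Fin k → ℝ) :
    -- conditional marginal of a single coordinate
    (∀ (i : Fin n) (ℓ : Fin q),
      (∑ x ∈ Finset.univ.filter (fun x : Fin n → Fin q => x i = ℓ), jointLowRankAG μ p x z)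
          / (∑ x : Fin n → Fin q, jointLowRankAG μ p x z)
        = Real.exp (∑ j : Fin k, μ j * z ℓ j * p j i)
          / ∑ a : Fin q, Real.exp (∑ j : Fin k, μ j * z a j * p j i))
    ∧ -- mutual independence of the coordinates given Z = z
    (∀ σ : Fin n → Fin q,
      jointLowRankAG μ p σ z / (∑ x : Fin n → Fin q, jointLowRankAG μ p x z)
        = ∏ i : Fin n,
            Real.exp (∑ j : Fin k, μ j * z (σ i) j * p j i)
              / ∑ a : Fin q, Real.exp (∑ j : Fin k, μ j * z a j * p j i)) := by
  set h : Fin n → Fin q → ℝ := fun i a => Real.exp (∑ j, μ j * z a j * p j i) with hh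
  set D : Fin n → ℝ := fun i => ∑ a, h i a with hD
  have hhpos : ∀ i a, 0 < h i a := fun i a => Real.exp_pos _
  have hDpos : ∀ i, 0 < D i := fun i =>
    Finset.sum_pos (fun a _ => hhpos i a) ⟨⟨0, by omega⟩, Finset.mem_univ _⟩
  set C : ℝ := Real.exp (-(1 / 2) * ∑ ℓ : Fin q, ∑ j : Fin k, μ j * z ℓ j ^ 2) with hC
  have hCpos : 0 < C := Real.exp_pos _
  -- key factorization of the joint density
  have key : ∀ x : Fin n → Fin q,
      jointLowRankAG μ p x z = C * ∏ i, h i (x i) := by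
    intro x
    unfold jointLowRankAG
    rw [hC, hh]
    rw [← Real.exp_sum (f := fun i => ∑ j, μ j * z (x i) j * p j i), ← Real.exp_add,
      ← Real.exp_add]
    congr 1
    have expand : ∑ ℓ : Fin q, ∑ j : Fin k,
        μ j * z ℓ j * (p j ⬝ᵥ fun i => if x i = ℓ then (1:ℝ) else 0)
        = ∑ i : Fin n, ∑ j : Fin k, μ j * z (x i) j * p j i := by
      simp only [dotProduct, Finset.mul_sum, mul_ite, mul_one, mul_zero]
      calc ∑ ℓ : Fin q, ∑ j : Fin k, ∑ i : Fin n,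
            (if x i = ℓ then μ j * z ℓ j * p j i else 0)
          = ∑ j : Fin k, ∑ ℓ : Fin q, ∑ i : Fin n,
            (if x i = ℓ then μ j * z ℓ j * p j i else 0) := Finset.sum_comm
        _ = ∑ j : Fin k, ∑ i : Fin n, ∑ ℓ : Fin q,
            (if x i = ℓ then μ j * z ℓ j * p j i else 0) :=
            Finset.sum_congr rfl fun j _ => Finset.sum_comm
        _ = ∑ i : Fin n, ∑ j : Fin k, ∑ ℓ : Fin q,
            (if x i = ℓ then μ j * z ℓ j * p j i else 0) := Finset.sum_comm
        _ = ∑ i : Fin n, ∑ j : Fin k, μ j * z (x i) j * p j i := by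
            refine Finset.sum_congr rfl fun i _ => Finset.sum_congr rfl fun j _ => ?_
            simp
    have hterm : ∀ (s : Fin q → Fin k → ℝ),
        (1 / 2) * (∑ ℓ : Fin q, ∑ j : Fin k, μ j * s ℓ j ^ 2)
          + (-(1 / 2)) * (∑ ℓ : Fin q, ∑ j : Fin k, μ j * (z ℓ j - s ℓ j) ^ 2)
        = (-(1 / 2)) * (∑ ℓ : Fin q, ∑ j : Fin k, μ j * z ℓ j ^ 2)
          + ∑ ℓ : Fin q, ∑ j : Fin k, μ j * z ℓ j * s ℓ j := by
      intro s
      simp only [Finset.mul_sum, ← Finset.sum_add_distrib]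
      refine Finset.sum_congr rfl fun ℓ _ => Finset.sum_congr rfl fun j _ => ?_
      ring
    rw [hterm (fun ℓ j => p j ⬝ᵥ fun i => if x i = ℓ then (1:ℝ) else 0), expand]
  -- the normalizing constant factorizes
  have hden : (∑ x : Fin n → Fin q, jointLowRankAG μ p x z) = C * ∏ i, D i := by
    simp only [key]
    rw [← Finset.mul_sum]
    congr 1
    rw [hD]
    rw [Finset.prod_univ_sum]
    simp [Fintype.piFinset_univ]
  refine ⟨?_, ?_⟩
  · intro i ℓ
    have hnum : (∑ x ∈ Finset.univ.filter (fun x : Fin n → Fin q => x i = ℓ),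
        jointLowRankAG μ p x z) = C * (h i ℓ * ∏ i' ∈ Finset.univ.erase i, D i') := by
      simp only [key]
      rw [← Finset.mul_sum]
      congr 1
      set H : Fin n → Fin q → ℝ :=
        fun i' a => if i' = i then (if a = ℓ then h i' a else 0) else h i' a with hH
      have step1 : ∀ x : Fin n → Fin q,
          (if x i = ℓ then ∏ i', h i' (x i') else 0) = ∏ i', H i' (x i') := by
        intro x
        rw [← Finset.mul_prod_erase univ (fun i' => H i' (x i')) (mem_univ i)]
        have hrest : ∏ i' ∈ univ.erase i, H i' (x i') = ∏ i' ∈ univ.erase i, h i' (x i') :=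
          Finset.prod_congr rfl fun i' hi' => by
            simp [hH, (Finset.mem_erase.mp hi').1]
        rw [hrest]
        simp only [hH, if_pos rfl]
        by_cases hx : x i = ℓ
        · rw [if_pos hx, if_pos hx, hx,
            ← Finset.mul_prod_erase univ (fun i' => h i' (x i')) (mem_univ i), hx]
        · rw [if_neg hx, if_neg hx, zero_mul]
      rw [Finset.sum_filter]
      simp only [step1]
      have hswap : ∑ x : Fin n → Fin q, ∏ i', H i' (x i') = ∏ i', ∑ a, H i' a := by
        rw [Finset.prod_univ_sum]
        simp [Fintype.piFinset_univ]
      rw [hswap, ← Finset.mul_prod_erase univ (fun i' => ∑ a, H i' a) (mem_univ i)]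
      congr 1
      · simp [hH]
      · refine Finset.prod_congr rfl fun i' hi' => Finset.sum_congr rfl fun a _ => by
          simp [hH, (Finset.mem_erase.mp hi').1]
    rw [hnum, hden]
    have hprod : ∏ i', D i' = D i * ∏ i' ∈ univ.erase i, D i' :=
      (Finset.mul_prod_erase univ D (mem_univ i)).symm
    rw [hprod]
    rw [div_eq_div_iff (mul_pos hCpos (mul_pos (hDpos i) (Finset.prod_pos fun _ _ => hDpos _))).ne' (hDpos i).ne']
    ring
  · intro σ
    rw [key σ, hden, mul_div_mul_left _ _ hCpos.ne', ← Finset.prod_div_distrib]
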